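/- Let G be a finite simple graph with graph Laplacian L and let 0<α<1. Let v,w be adjacent vertices with degrees d_v, d_w. Then, as t→0⁺, the subdiffusive distance satisfies 𝒟_{α,t}(v,w) = 2 − (t^α/Γ(α+1))·(d_v + d_w + 2) + O(t^{2α}); that is, t ↦ 𝒟_{α,t}(v,w) − 2 + (t^α/Γ(α+1))·(d_v+d_w+2) is O(t^{2α}) as t tends to 0 from the right. -/

import Mathlib

open Matrix Asymptotics Filter

/-- The Mittag-Leffler matrix function `E_α(M) = ∑_{k=0}^∞ M^k/Γ(αk+1)`, defined entrywise. -/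
noncomputable def mittagLefflerMatrix {n : ℕ} (α : ℝ) (M : Matrix (Fin n) (Fin n) ℝ) :
    Matrix (Fin n) (Fin n) ℝ :=
  Matrix.of fun i j => ∑' k : ℕ, ((M ^ k) i j) / Real.Gamma (α * k + 1)

/-- The subdiffusive distance
`𝒟_{α,t}(v,w) = (E_α(−t^αL))_{vv} + (E_α(−t^αL))_{ww} − 2(E_α(−t^αL))_{vw}`. -/
noncomputable def subdiffDist {n : ℕ} (G : SimpleGraph (Fin n)) [DecidableRel G.Adj]
    (α t : ℝ) (v w : Fin n) : ℝ :=
  mittagLefflerMatrix α (-(t ^ α) • G.lapMatrix ℝ) v v +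
    mittagLefflerMatrix α (-(t ^ α) • G.lapMatrix ℝ) w w -
    2 * mittagLefflerMatrix α (-(t ^ α) • G.lapMatrix ℝ) v w

/-!
Entrywise, `s ↦ E_α(s • M)` is the power series `∑ₖ (Mᵏ)ᵢⱼ / Γ(αk+1) · sᵏ`. Its coefficients grow
at most geometrically, because `|(Mᵏ)ᵢⱼ| ≤ ‖M‖ᵏ` for the `L^∞` operator norm and `Γ` is bounded
below on `(0, ∞)`; so it has a positive radius of convergence and Taylor's formula gives
`E_α(s • M) = 1 + s • M / Γ(α+1) + O(s²)`. Substituting `s = -t^α` and reading off `L_vv = d_v`,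
`L_ww = d_w`, `L_vw = -1` gives the expansion.
-/

open Topology

namespace Matrix

open scoped Matrix.Norms.Operator

theorem norm_apply_le_linfty_opNorm {m n α : Type*} [Fintype m] [Fintype n]
    [SeminormedAddCommGroup α] (A : Matrix m n α) (i : m) (j : n) : ‖A i j‖ ≤ ‖A‖ := by
  rw [← coe_nnnorm, ← coe_nnnorm, NNReal.coe_le_coe, linfty_opNNNorm_def]
  exact (Finset.single_le_sum (fun j _ => zero_le) (Finset.mem_univ j)).trans
    (Finset.le_sup (f := fun i => ∑ j, ‖A i j‖₊) (Finset.mem_univ i))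

theorem norm_pow_apply_le_linfty_opNorm_pow {n α : Type*} [Fintype n] [DecidableEq n]
    [NormedRing α] [NormOneClass α] (A : Matrix n n α) (k : ℕ) (i j : n) :
    ‖(A ^ k) i j‖ ≤ ‖A‖ ^ k :=
  have : Nonempty n := ⟨i⟩
  (norm_apply_le_linfty_opNorm _ i j).trans (norm_pow_le _ k)

end Matrix

section PowerSeries

variable {𝕜 : Type*} [NontriviallyNormedField 𝕜] {a : ℕ → 𝕜} {C B : ℝ}

theorem FormalMultilinearSeries.ofScalars_radius_pos_of_norm_le (h : ∀ k, ‖a k‖ ≤ C * B ^ k) :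
    0 < (ofScalars 𝕜 a).radius := by
  set r : NNReal := (‖B‖₊ + 1)⁻¹
  have hBr : |B| * r ≤ 1 := by
    rw [NNReal.coe_inv, NNReal.coe_add, coe_nnnorm, NNReal.coe_one, Real.norm_eq_abs,
      ← div_eq_mul_inv, div_le_one (by positivity)]
    linarith
  refine lt_of_lt_of_le (ENNReal.coe_pos.2 (inv_pos.2 (by positivity)))
    ((ofScalars 𝕜 a).le_radius_of_bound (r := r) |C| fun k => ?_)
  calc ‖ofScalars 𝕜 a k‖ * (r : ℝ) ^ k ≤ |C| * |B| ^ k * (r : ℝ) ^ k := by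
        gcongr
        simpa using (h k).trans ((le_abs_self _).trans (by simp [abs_mul]))
    _ = |C| * (|B| * r) ^ k := by ring
    _ ≤ |C| := mul_le_of_le_one_right (abs_nonneg C) (pow_le_one₀ (by positivity) hBr)

theorem isBigO_tsum_mul_pow_sub_linear [CompleteSpace 𝕜] (h : ∀ k, ‖a k‖ ≤ C * B ^ k) :
    (fun s : 𝕜 => ∑' k, a k * s ^ k - (a 0 + a 1 * s)) =O[𝓝 0] fun s => s ^ 2 := by
  have hTaylor := ((FormalMultilinearSeries.ofScalars 𝕜 a).hasFPowerSeriesOnBall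
    (FormalMultilinearSeries.ofScalars_radius_pos_of_norm_le h)).hasFPowerSeriesAt
    |>.isBigO_sub_partialSum_pow 2
  simp only [zero_add, FormalMultilinearSeries.sum, FormalMultilinearSeries.partialSum,
    FormalMultilinearSeries.ofScalars_apply_eq, Finset.sum_range_succ, Finset.sum_range_zero,
    smul_eq_mul, pow_zero, pow_one, mul_one] at hTaylor
  have hsq : (fun s : 𝕜 => ‖s‖ ^ 2) =O[𝓝 0] fun s => s ^ 2 :=
    (isBigO_refl _ _).norm_left.congr_left fun s => norm_pow s 2
  simpa only [mul_comm] using hTaylor.trans hsq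

end PowerSeries

theorem mittagLefflerMatrix_smul_apply {n : ℕ} (α s : ℝ) (M : Matrix (Fin n) (Fin n) ℝ)
    (i j : Fin n) :
    mittagLefflerMatrix α (s • M) i j =
      ∑' k : ℕ, (M ^ k) i j / Real.Gamma (α * k + 1) * s ^ k := by
  simp only [mittagLefflerMatrix, of_apply, smul_pow, Matrix.smul_apply, smul_eq_mul]
  exact tsum_congr fun k => by ring

open scoped Matrix.Norms.Operator in
theorem isBigO_mittagLefflerMatrix_smul_apply {n : ℕ} {α : ℝ} (hα : 0 ≤ α)
    (M : Matrix (Fin n) (Fin n) ℝ) (i j : Fin n) :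
    (fun s : ℝ => mittagLefflerMatrix α (s • M) i j -
      ((1 : Matrix (Fin n) (Fin n) ℝ) i j + M i j / Real.Gamma (α + 1) * s))
      =O[𝓝 0] fun s => s ^ 2 := by
  obtain ⟨x₀, hx₀, hmin⟩ := Real.exists_isMinOn_Gamma_Ioi
  have hΓ₀ : 0 < Real.Gamma x₀ := Real.Gamma_pos_of_pos (by linarith [hx₀.1])
  have hgrowth (k : ℕ) :
      ‖(M ^ k) i j / Real.Gamma (α * k + 1)‖ ≤ (Real.Gamma x₀)⁻¹ * ‖M‖ ^ k := by
    have hk : 0 < α * k + 1 := by positivity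
    rw [norm_div, Real.norm_of_nonneg (Real.Gamma_pos_of_pos hk).le, div_eq_mul_inv, mul_comm]
    exact mul_le_mul (inv_anti₀ hΓ₀ (hmin (Set.mem_Ioi.2 hk)))
      (M.norm_pow_apply_le_linfty_opNorm_pow k i j) (norm_nonneg _) (inv_nonneg.2 hΓ₀.le)
  simpa [mittagLefflerMatrix_smul_apply] using isBigO_tsum_mul_pow_sub_linear hgrowth

namespace SimpleGraph

variable {V R : Type*} [Fintype V] [DecidableEq V] (G : SimpleGraph V) [DecidableRel G.Adj]
  [AddGroupWithOne R]

theorem lapMatrix_apply_self (v : V) : G.lapMatrix R v v = G.degree v := by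
  simp [lapMatrix, degMatrix]

theorem lapMatrix_apply_of_adj {v w : V} (h : G.Adj v w) : G.lapMatrix R v w = -1 := by
  simp [lapMatrix, degMatrix, h, h.ne]

end SimpleGraph

theorem subdiffDist_small_time_expansion_general
    (n : ℕ) (G : SimpleGraph (Fin n)) [DecidableRel G.Adj]
    (α : ℝ) (hα0 : 0 < α)
    (v w : Fin n) (hadj : G.Adj v w) :
    (fun t : ℝ => subdiffDist G α t v w - 2 +
        t ^ α / Real.Gamma (α + 1) * ((G.degree v : ℝ) + (G.degree w : ℝ) + 2))
      =O[nhdsWithin 0 (Set.Ioi 0)] (fun t : ℝ => t ^ (2 * α)) := by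
  have hs : Tendsto (fun t : ℝ => -t ^ α) (𝓝[>] 0) (𝓝 0) := by
    simpa [Real.zero_rpow hα0.ne'] using ((Real.continuousAt_rpow_const 0 α
      (Or.inr hα0.le)).tendsto.mono_left nhdsWithin_le_nhds).neg
  have hE (i j : Fin n) :=
    (isBigO_mittagLefflerMatrix_smul_apply hα0.le (G.lapMatrix ℝ) i j).comp_tendsto hs
  have hsq : (fun t : ℝ => (-t ^ α) ^ 2) =ᶠ[𝓝[>] 0] fun t => t ^ (2 * α) := by
    filter_upwards [self_mem_nhdsWithin] with t ht
    rw [neg_sq, ← Real.rpow_natCast, ← Real.rpow_mul ht.le, mul_comm]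
    norm_num
  refine (((hE v v).add (hE w w)).sub ((hE v w).const_mul_left 2)).congr' ?_ hsq
  filter_upwards with t
  simp only [Function.comp_apply, subdiffDist, G.lapMatrix_apply_self,
    G.lapMatrix_apply_of_adj hadj, one_apply_eq, one_apply_ne hadj.ne]
  ring

/-- Small-time expansion of the subdiffusive distance between adjacent vertices:
`𝒟_{α,t}(v,w) = 2 − (t^α/Γ(α+1))·(d_v + d_w + 2) + O(t^{2α})` as `t → 0⁺`. -/
theorem subdiffDist_small_time_expansion
    (n : ℕ) (G : SimpleGraph (Fin n)) [DecidableRel G.Adj]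
    (α : ℝ) (hα0 : 0 < α) (hα1 : α < 1)
    (v w : Fin n) (hadj : G.Adj v w) :
    (fun t : ℝ => subdiffDist G α t v w - 2 +
        t ^ α / Real.Gamma (α + 1) * ((G.degree v : ℝ) + (G.degree w : ℝ) + 2))
      =O[nhdsWithin 0 (Set.Ioi 0)] (fun t : ℝ => t ^ (2 * α)) :=
  subdiffDist_small_time_expansion_general n G α hα0 v w hadj
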